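/- arXiv:1010.3897 — 2 statements merged into one kernel-verified Lean document; each statement's English description precedes it below -/
import Mathlib

section
/- If E₁ and E₂ are elliptic curves over ℂ, then the ℚ-algebra End(E₁ × E₂) ⊗ ℚ does not contain a subfield isomorphic to ℚ(ζ₅), the fifth cyclotomic field. -/
/-!
The first column `x ↦ f x • (1, 0)` of a ring map `f : ℚ(ζ₅) → End(E₁ × E₂) ⊗ ℚ ⊆ M₂(ℂ)` is an
injective `ℚ`-linear map from a field of degree 4 into `(ℚ + ℚτ₁) × (ℚ + ℚτ₂)`, so it is onto.
Hence some `y` has first column `(τ₁, 0)`; then `f y` preserves the line `ℂ × 0`, acting on it by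
`τ₁`, and `τ₁² ∈ ℚ + ℚτ₁` forces `y` to satisfy the same imaginary quadratic equation as `τ₁`.
But `ℚ(ζ₅)` has no imaginary quadratic subfield: complex conjugation `ζ ↦ ζ⁴` is the square of
the automorphism `σ : ζ ↦ ζ²`, and `σ` fixes a square root of a rational number up to sign.
-/

open Polynomial Module Submodule ComplexConjugate

theorem IsCyclotomicExtension.Rat.exists_conj_eq_sq {n k : ℕ} [NeZero n] (hk : n ∣ k ^ 2 + 1)
    (K : Type*) [Field K] [Algebra ℚ K] [IsCyclotomicExtension {n} ℚ K] :
    ∃ (e : K →+* ℂ) (σ : K →+* K), ∀ x, conj (e x) = e (σ (σ x)) := by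
  have hζ := zeta_spec n ℚ K
  have hcop : k.Coprime n := by
    rw [sq] at hk
    exact .coprime_dvd_right hk ((Nat.coprime_mul_right_add_right k 1 k).mpr k.coprime_one_right)
  let σ : K ≃ₐ[ℚ] K :=
    fromZetaAut (hζ.pow_of_coprime k hcop) (cyclotomic.irreducible_rat (NeZero.pos n))
  have hσ : σ (zeta n ℚ K) = zeta n ℚ K ^ k := fromZetaAut_spec _ _
  have := IsCyclotomicExtension.finiteDimensional {n} ℚ K
  let e : K →ₐ[ℚ] ℂ := IsAlgClosed.lift
  have heζ : IsPrimitiveRoot (e (zeta n ℚ K)) n := hζ.map_of_injective (f := e) e.injective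
  have hext : (Complex.conjAe.toAlgHom.restrictScalars ℚ).comp e =
      e.comp (σ.toAlgHom.comp σ.toAlgHom) := by
    -- conjugation inverts the root of unity `e ζ`, and `ζ ^ (k ^ 2) = ζ⁻¹`
    refine (hζ.powerBasis ℚ).algHom_ext ?_
    have hpow : e (zeta n ℚ K) ^ (k ^ 2 + 1) = 1 := heζ.pow_eq_one_iff_dvd _ |>.mpr hk
    simp only [IsPrimitiveRoot.powerBasis_gen, AlgHom.comp_apply, AlgEquiv.coe_toAlgHom, hσ,
      map_pow]
    rw [AlgHom.restrictScalars_apply, AlgEquiv.coe_toAlgHom, Complex.conjAe_coe,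
      ← Complex.inv_eq_conj (Complex.norm_eq_one_of_pow_eq_one heζ.pow_eq_one (NeZero.ne n)),
      ← pow_mul, ← sq]
    exact (eq_inv_of_mul_eq_one_left (by rwa [← pow_succ])).symm
  exact ⟨e, σ, fun x => DFunLike.congr_fun hext x⟩

theorem discrim_nonneg_of_conj_eq_sq {K : Type*} [Field K] [CharZero K] (e : K →+* ℂ)
    (σ : K →+* K) (hσ : ∀ x, conj (e x) = e (σ (σ x))) {a b c : ℚ} {y : K}
    (hy : a * (y * y) + b * y + c = 0) : 0 ≤ discrim a b c := by
  set s := 2 * a * y + b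
  have hs : s * s = (discrim a b c : ℚ) := by
    rw [← sq, ← discrim_eq_sq_of_quadratic_eq_zero hy, discrim, discrim]
    push_cast
    ring
  generalize discrim a b c = D at hs ⊢
  -- `σ s = ± s` since `σ` fixes `s * s = D`, so `σ ∘ σ`, hence complex conjugation, fixes `s`.
  have hfix : σ (σ s) = s := by
    rcases mul_self_eq_mul_self_iff.mp (show σ s * σ s = s * s by rw [← map_mul, hs, map_ratCast])
      with h | h <;> simp [h]
  obtain ⟨r, hr⟩ := Complex.conj_eq_iff_real.mp (show conj (e s) = e s by rw [hσ, hfix])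
  have hD : ((D : ℝ) : ℂ) = ((r * r : ℝ) : ℂ) := by
    rw [Complex.ofReal_ratCast, ← map_ratCast e, ← hs, map_mul, hr, Complex.ofReal_mul]
  exact Rat.cast_nonneg.mp (Complex.ofReal_injective hD ▸ mul_self_nonneg r)

theorem Complex.discrim_lt_zero_of_im_ne_zero {a b c : ℝ} {z : ℂ} (ha : a ≠ 0) (hz : z.im ≠ 0)
    (h : a * (z * z) + b * z + c = 0) : discrim a b c < 0 := by
  have hre := congrArg Complex.re h
  have him := congrArg Complex.im h
  simp only [Complex.add_re, Complex.add_im, Complex.mul_re, Complex.mul_im, Complex.ofReal_re,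
    Complex.ofReal_im, zero_mul, sub_zero, add_zero, Complex.zero_re, Complex.zero_im] at hre him
  have hb : b = -2 * a * z.re := mul_right_cancel₀ hz (by linear_combination him)
  have hc : c = a * (z.re ^ 2 + z.im ^ 2) := by linear_combination hre - z.re * hb
  have : discrim a b c = -(2 * a * z.im) ^ 2 := by rw [discrim, hb, hc]; ring
  rw [this, neg_neg_iff_pos]
  positivity

theorem mul_self_ne_of_conj_eq_sq {K : Type*} [Field K] [CharZero K] (e : K →+* ℂ)
    (σ : K →+* K) (hσ : ∀ x, conj (e x) = e (σ (σ x))) {τ : ℂ} (hτ : τ.im ≠ 0) {b c : ℚ}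
    (hτbc : τ * τ = c • 1 + b • τ) (y : K) : y * y ≠ c • 1 + b • y := by
  intro hy
  have hK := discrim_nonneg_of_conj_eq_sq e σ hσ (a := 1) (b := -b) (c := -c) (y := y)
    (by rw [hy, Rat.smul_def, Rat.smul_def]; push_cast; ring)
  have hC := Complex.discrim_lt_zero_of_im_ne_zero (a := 1) (b := -b) (c := -c) one_ne_zero hτ
    (by rw [hτbc, Rat.smul_def, Rat.smul_def]; push_cast; ring)
  rw [discrim] at hK hC
  exact hC.not_ge (by exact_mod_cast hK)

theorem RingHom.eq_zero_of_column_eq_zero {K R m : Type*} [DivisionRing K] [Semiring R]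
    [Nontrivial R] [Fintype m] [DecidableEq m] (f : K →+* Matrix m m R) {x : K} {j : m}
    (h : ∀ i, f x i j = 0) : x = 0 := by
  by_contra hx
  have := congr_fun₂ (congrArg f (inv_mul_cancel₀ hx)) j j
  simp [Matrix.mul_apply, h] at this

instance Submodule.finite_prod {R M N : Type*} [Ring R]
    [AddCommGroup M] [Module R M] [AddCommGroup N] [Module R N]
    (p : Submodule R M) (q : Submodule R N) [Module.Finite R p] [Module.Finite R q] :
    Module.Finite R (p.prod q) := by
  rw [← p.range_subtype, ← q.range_subtype, ← LinearMap.range_prodMap]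
  infer_instance

theorem Submodule.finrank_prod_le {R M N : Type*} [DivisionRing R]
    [AddCommGroup M] [Module R M] [AddCommGroup N] [Module R N]
    (p : Submodule R M) (q : Submodule R N) [Module.Finite R p] [Module.Finite R q] :
    finrank R (p.prod q) ≤ finrank R p + finrank R q := by
  have := LinearMap.finrank_range_le (p.subtype.prodMap q.subtype)
  rwa [LinearMap.range_prodMap, range_subtype, range_subtype, finrank_prod] at this

theorem finrank_span_pair_le {R M : Type*} [Ring R] [StrongRankCondition R] [AddCommGroup M]
    [Module R M] (x y : M) : finrank R (span R {x, y}) ≤ 2 := by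
  classical
  exact (finrank_span_le_card _).trans (by simpa using Finset.card_le_two)

theorem Submodule.mem_span_rat_of_nsmul_mem_closure {E : Type*} [AddCommGroup E] [Module ℚ E]
    {S : Set E} {n : ℕ} (hn : n ≠ 0) {z : E} (h : n • z ∈ AddSubgroup.closure S) :
    z ∈ span ℚ S := by
  have hspan : n • z ∈ span ℚ S :=
    (AddSubgroup.closure_le (span ℚ S).toAddSubgroup).mpr subset_span h
  simpa [← Nat.cast_smul_eq_nsmul ℚ, smul_smul, hn] using (span ℚ S).smul_mem (n : ℚ)⁻¹ hspan

theorem Matrix.mul_mem_span_rat_of_smul_preserves_closure {S₁ S₂ : Set ℂ}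
    {M : Matrix (Fin 2) (Fin 2) ℂ} {n : ℕ} (hn : n ≠ 0)
    (hM : ∀ v : Fin 2 → ℂ, v 0 ∈ AddSubgroup.closure S₁ → v 1 ∈ AddSubgroup.closure S₂ →
      (((n : ℂ) • M).mulVec v 0 ∈ AddSubgroup.closure S₁ ∧
        ((n : ℂ) • M).mulVec v 1 ∈ AddSubgroup.closure S₂))
    {z : ℂ} (hz : z ∈ AddSubgroup.closure S₁) : M 0 0 * z ∈ span ℚ S₁ ∧ M 1 0 * z ∈ span ℚ S₂ := by
  have h := hM ![z, 0] hz (zero_mem _)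
  simp only [Matrix.mulVec, dotProduct, Fin.sum_univ_two, Matrix.cons_val_zero,
    Matrix.cons_val_one, Matrix.smul_apply, mul_zero, smul_zero, add_zero, smul_mul_assoc,
    Nat.cast_smul_eq_nsmul] at h
  exact ⟨mem_span_rat_of_nsmul_mem_closure hn h.1, mem_span_rat_of_nsmul_mem_closure hn h.2⟩

section FirstColumn

variable {K : Type*} [Field K] [Algebra ℚ K] (f : K →+* Matrix (Fin 2) (Fin 2) ℂ)

noncomputable def firstColumn : K →ₗ[ℚ] ℂ × ℂ :=
  ((Matrix.entryLinearMap ℚ ℂ 0 0).prod (Matrix.entryLinearMap ℚ ℂ 1 0)).comp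
    f.toRatAlgHom.toLinearMap

@[simp]
theorem firstColumn_apply (x : K) : firstColumn f x = (f x 0 0, f x 1 0) := rfl

theorem firstColumn_injective : Function.Injective (firstColumn f) := by
  refine (injective_iff_map_eq_zero _).mpr fun x hx => f.eq_zero_of_column_eq_zero (j := 0) ?_
  simp only [firstColumn_apply, Prod.mk_eq_zero] at hx
  exact Fin.forall_fin_two.mpr hx

theorem firstColumn_mul {y : K} {τ : ℂ} (hy : firstColumn f y = (τ, 0)) (x : K) :
    firstColumn f (x * y) = τ • firstColumn f x := by
  simp only [firstColumn_apply, Prod.mk.injEq] at hy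
  simp [Matrix.mul_apply, Fin.sum_univ_two, hy.1, hy.2, mul_comm τ]

theorem range_firstColumn {V₁ V₂ : Submodule ℚ ℂ} [FiniteDimensional ℚ V₁]
    [FiniteDimensional ℚ V₂] (hf : ∀ x, firstColumn f x ∈ V₁.prod V₂)
    (hdim : finrank ℚ V₁ + finrank ℚ V₂ ≤ finrank ℚ K) :
    LinearMap.range (firstColumn f) = V₁.prod V₂ := by
  refine eq_of_le_of_finrank_le ?_ ?_
  · rintro _ ⟨x, rfl⟩
    exact hf x
  · rw [LinearMap.finrank_range_of_inj (firstColumn_injective f)]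
    exact (finrank_prod_le V₁ V₂).trans hdim

theorem mul_self_eq_of_firstColumn_eq {y : K} {τ : ℂ} (hy : firstColumn f y = (τ, 0))
    {b c : ℚ} (hτ : τ * τ = c • 1 + b • τ) : y * y = c • 1 + b • y := by
  apply firstColumn_injective f
  have h1 : firstColumn f 1 = (1, 0) := by simp
  rw [firstColumn_mul f hy, map_add, map_smul, map_smul, hy, h1]
  ext <;> simp [hτ]

end FirstColumn

theorem stmt_1_general (τ₁ τ₂ : ℂ) (h₁ : τ₁.im ≠ 0) :
    let Λ₁ : AddSubgroup ℂ := AddSubgroup.closure {1, τ₁}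
    let Λ₂ : AddSubgroup ℂ := AddSubgroup.closure {1, τ₂}
    let End : Set (Matrix (Fin 2) (Fin 2) ℂ) :=
      {M | ∀ v : Fin 2 → ℂ, v 0 ∈ Λ₁ → v 1 ∈ Λ₂ →
        (M.mulVec v 0 ∈ Λ₁ ∧ M.mulVec v 1 ∈ Λ₂)}
    ¬ ∃ f : CyclotomicField 5 ℚ →+* Matrix (Fin 2) (Fin 2) ℂ,
        ∀ a : CyclotomicField 5 ℚ, ∃ n : ℕ, 0 < n ∧ (n : ℂ) • f a ∈ End := by
  intro Λ₁ Λ₂ End ⟨f, hf⟩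
  set V₁ := span ℚ ({1, τ₁} : Set ℂ)
  set V₂ := span ℚ ({1, τ₂} : Set ℂ)
  have hcol (a) : firstColumn f a ∈ V₁.prod V₂ ∧ f a 0 0 * τ₁ ∈ V₁ := by
    obtain ⟨n, hn, hM⟩ := hf a
    have h1 := Matrix.mul_mem_span_rat_of_smul_preserves_closure hn.ne' hM
      (AddSubgroup.subset_closure (by simp) : (1 : ℂ) ∈ Λ₁)
    have hτ := Matrix.mul_mem_span_rat_of_smul_preserves_closure hn.ne' hM
      (AddSubgroup.subset_closure (by simp) : τ₁ ∈ Λ₁)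
    simp only [mul_one] at h1
    exact ⟨h1, hτ.1⟩
  have : IsCyclotomicExtension {5} ℚ (CyclotomicField 5 ℚ) :=
    CyclotomicField.isCyclotomicExtension 5 ℚ
  have : FiniteDimensional ℚ V₁ := .span_of_finite ℚ (Set.toFinite _)
  have : FiniteDimensional ℚ V₂ := .span_of_finite ℚ (Set.toFinite _)
  have hdim : finrank ℚ V₁ + finrank ℚ V₂ ≤ finrank ℚ (CyclotomicField 5 ℚ) := by
    rw [IsCyclotomicExtension.finrank (n := 5) _ (cyclotomic.irreducible_rat (by norm_num)),
      Nat.totient_prime Nat.prime_five]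
    linarith [finrank_span_pair_le (R := ℚ) (1 : ℂ) τ₁, finrank_span_pair_le (R := ℚ) (1 : ℂ) τ₂]
  obtain ⟨y, hy⟩ : (τ₁, 0) ∈ LinearMap.range (firstColumn f) :=
    range_firstColumn f (fun a => (hcol a).1) hdim ▸ ⟨subset_span (by simp), zero_mem _⟩
  have hττ : τ₁ * τ₁ ∈ V₁ := by
    simpa only [show f y 0 0 = τ₁ from congrArg Prod.fst hy] using (hcol y).2
  obtain ⟨c₀, c₁, hc⟩ := mem_span_pair.mp hττ
  obtain ⟨e, σ, hσ⟩ :=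
    IsCyclotomicExtension.Rat.exists_conj_eq_sq (n := 5) (k := 2) (by norm_num) (CyclotomicField 5 ℚ)
  exact mul_self_ne_of_conj_eq_sq e σ hσ h₁ hc.symm y (mul_self_eq_of_firstColumn_eq f hy hc.symm)

/-- If `E₁ = ℂ/(ℤ + ℤτ₁)` and `E₂ = ℂ/(ℤ + ℤτ₂)` are elliptic curves over `ℂ`, then the
`ℚ`-algebra `End(E₁ × E₂) ⊗ ℚ` contains no subfield isomorphic to `ℚ(ζ₅)`.
Here `End(E₁ × E₂)` is realised as the ring of `2×2` complex matrices preserving the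
lattice `Λ₁ × Λ₂`, and `End ⊗ ℚ` as the set of matrices with an integer multiple in it. -/
theorem stmt_1 (τ₁ τ₂ : ℂ) (h₁ : τ₁.im ≠ 0) (h₂ : τ₂.im ≠ 0) :
    let Λ₁ : AddSubgroup ℂ := AddSubgroup.closure {1, τ₁}
    let Λ₂ : AddSubgroup ℂ := AddSubgroup.closure {1, τ₂}
    let End : Set (Matrix (Fin 2) (Fin 2) ℂ) :=
      {M | ∀ v : Fin 2 → ℂ, v 0 ∈ Λ₁ → v 1 ∈ Λ₂ →
        (M.mulVec v 0 ∈ Λ₁ ∧ M.mulVec v 1 ∈ Λ₂)}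
    ¬ ∃ f : CyclotomicField 5 ℚ →+* Matrix (Fin 2) (Fin 2) ℂ,
        ∀ a : CyclotomicField 5 ℚ, ∃ n : ℕ, 0 < n ∧ (n : ℂ) • f a ∈ End :=
  stmt_1_general τ₁ τ₂ h₁
end

section
/- The point q₀ = (1 : ζ : ζ² : ζ³ : ζ⁴), with ζ a primitive fifth root of unity, is a singular point of the projective surface S ⊂ P⁴ defined by s₁ = 0 and f := s₂³ + 10 s₃² − 20 s₂ s₄ = 0; that is, the Jacobian matrix of (s₁, f) at q₀ has rank at most 1. -/
open MvPolynomial Polynomial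

-- esymm of the multiset of 5th roots of unity vanishes in degrees 1..4
lemma esymm_roots_zero (ζ : ℂ) (hζ : IsPrimitiveRoot ζ 5) (j : ℕ) (h1 : 1 ≤ j) (h4 : j ≤ 4) :
    (Polynomial.nthRoots 5 (1 : ℂ)).esymm j = 0 := by
  have hcard : Multiset.card (Polynomial.nthRoots 5 (1 : ℂ)) = 5 := by
    rw [hζ.card_nthRoots]
    rw [if_pos ⟨1, one_pow 5⟩]
  have hroots : (Polynomial.X ^ 5 - Polynomial.C (1 : ℂ)).roots = Polynomial.nthRoots 5 1 := rfl
  have hmonic : (Polynomial.X ^ 5 - Polynomial.C (1 : ℂ)).Monic :=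
    Polynomial.monic_X_pow_sub_C (1:ℂ) (by norm_num)
  have hdeg : (Polynomial.X ^ 5 - Polynomial.C (1 : ℂ)).natDegree = 5 := by
    exact Polynomial.natDegree_X_pow_sub_C
  have hprod := Polynomial.prod_multiset_X_sub_C_of_monic_of_roots_card_eq hmonic
    (by rw [hroots, hcard, hdeg])
  have hk : 5 - j ≤ Multiset.card (Polynomial.nthRoots 5 (1 : ℂ)) := by omega
  have := Multiset.prod_X_sub_C_coeff (Polynomial.nthRoots 5 (1 : ℂ)) hk
  rw [hroots] at hprod
  rw [hprod, hcard] at this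
  have hj : 5 - (5 - j) = j := by omega
  rw [hj] at this
  have hcoeff : (Polynomial.X ^ 5 - Polynomial.C (1 : ℂ)).coeff (5 - j) = 0 := by
    rw [Polynomial.coeff_sub, Polynomial.coeff_X_pow, Polynomial.coeff_C]
    have : 5 - j ≠ 5 := by omega
    have : ¬ (5 - j = 5) := by omega
    have h0 : 5 - j ≠ 0 := by omega
    simp_all
  rw [hcoeff] at this
  have hne : ((-1 : ℂ)) ^ j ≠ 0 := by
    apply pow_ne_zero; norm_num
  exact (mul_eq_zero.mp this.symm).resolve_left hne

/-- The point `q₀ = (1 : ζ : ζ² : ζ³ : ζ⁴)`, `ζ` a primitive fifth root of unity,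
is a singular point of the surface `S ⊂ P⁴` defined by `s₁ = 0` and
`f = s₂³ + 10s₃² − 20s₂s₄ = 0`: the Jacobian matrix of `(s₁, f)` at `q₀` has rank `≤ 1`. -/
theorem stmt_13 (ζ : ℂ) (hζ : IsPrimitiveRoot ζ 5) :
    let s : ℕ → MvPolynomial (Fin 5) ℂ := fun k => esymm (Fin 5) ℂ k
    let f : MvPolynomial (Fin 5) ℂ := (s 2) ^ 3 + 10 * (s 3) ^ 2 - 20 * (s 2) * (s 4)
    let q₀ : Fin 5 → ℂ := ![1, ζ, ζ^2, ζ^3, ζ^4]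
    let J : Matrix (Fin 2) (Fin 5) ℂ :=
      Matrix.of ![fun i => eval q₀ (pderiv i (s 1)), fun i => eval q₀ (pderiv i f)]
    (eval q₀ (s 1) = 0 ∧ eval q₀ f = 0) ∧ J.rank ≤ 1 := by
  intro s f q₀ J
  have hmult : (Finset.univ.val.map q₀) = Polynomial.nthRoots 5 (1:ℂ) := by
    rw [hζ.nthRoots_eq (one_pow 5)]
    show (Finset.univ.val.map q₀) = _
    simp [q₀, Fin.univ_val_map, List.ofFn_succ, Multiset.range_succ]
    exact Multiset.coe_eq_coe.mpr (List.reverse_perm [1, ζ, ζ^2, ζ^3, ζ^4]).symm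
  have keval : ∀ n, eval q₀ (s n) = (Finset.univ.val.map q₀).esymm n := by
    intro n
    rw [show s n = esymm (Fin 5) ℂ n from rfl, MvPolynomial.esymm, map_sum,
      Finset.esymm_map_val]
    simp
  have he : ∀ j, 1 ≤ j → j ≤ 4 → eval q₀ (s j) = 0 := fun j hj1 hj4 => by
    rw [keval, hmult, esymm_roots_zero ζ hζ j hj1 hj4]
  have h1 := he 1 (by norm_num) (by norm_num)
  have h2 := he 2 (by norm_num) (by norm_num)
  have h3 := he 3 (by norm_num) (by norm_num)
  have h4 := he 4 (by norm_num) (by norm_num)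
  have h10 : (10 : MvPolynomial (Fin 5) ℂ) = MvPolynomial.C (10:ℂ) := (map_ofNat MvPolynomial.C 10).symm
  have h20 : (20 : MvPolynomial (Fin 5) ℂ) = MvPolynomial.C (20:ℂ) := (map_ofNat MvPolynomial.C 20).symm
  have hfval : eval q₀ f = 0 := by
    rw [show f = (s 2) ^ 3 + 10 * (s 3) ^ 2 - 20 * (s 2) * (s 4) from rfl]
    simp only [map_add, map_sub, map_mul, map_pow, h10, h20, MvPolynomial.eval_C, h2, h3, h4]
    ring
  have hrow1 : (fun i => eval q₀ (pderiv i f)) = 0 := by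
    funext i
    rw [show f = (s 2) ^ 3 + 10 * (s 3) ^ 2 - 20 * (s 2) * (s 4) from rfl]
    simp only [h10, h20, map_add, map_sub, pderiv_mul, pderiv_pow, pderiv_C, map_mul, map_pow,
      MvPolynomial.eval_C, zero_mul, add_zero, zero_add, Pi.zero_apply]
    simp only [map_add, map_sub, map_mul, map_pow, MvPolynomial.eval_C, h2, h3, h4]
    ring
  refine ⟨⟨h1, hfval⟩, ?_⟩
  rw [Matrix.rank_eq_finrank_span_row]
  have hsub : Submodule.span ℂ (Set.range J) ≤ Submodule.span ℂ ({J 0} : Set (Fin 5 → ℂ)) := by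
    rw [Submodule.span_le]
    rintro - ⟨i, rfl⟩
    fin_cases i
    · exact Submodule.subset_span rfl
    · show J 1 ∈ _
      rw [show J 1 = 0 from hrow1]
      exact Submodule.zero_mem _
  refine le_trans (Submodule.finrank_mono hsub) ?_
  refine le_trans (finrank_span_le_card _) ?_
  simp
end
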